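/- For an asymptotically stable switched linear system with quadratic cost c(x) = xᵀQx, Q ≻ 0, and any l with η_l < 1 (η_l as defined from the (l+1)-step cost contraction), the scaled truncated costs V_α^l := (1/(1−η_l)) Ṽ_α^l on the nodes of the dual De Bruijn graph H_l^T(M) satisfy the path-complete inequalities V_α^l(x) ≥ xᵀQx + V_β^l(A_{i}x) for every edge (α,β,i), and max_α V_α^l(x) ≤ J(x)/(1−η_l) for all x. -/

import Mathlib

open scoped ENNReal
open Filter Matrix

/-- Trajectory of the switched linear system `x_{k+1} = A_{σ(k)} x_k`. -/
def trajL {n M : ℕ} (A : Fin M → Matrix (Fin n) (Fin n) ℝ)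
    (σ : ℕ → Fin M) (x : Fin n → ℝ) : ℕ → (Fin n → ℝ)
  | 0 => x
  | k + 1 => A (σ k) *ᵥ trajL A σ x k

/-- Quadratic form `xᵀ Q x`. -/
def quadForm {n : ℕ} (Q : Matrix (Fin n) (Fin n) ℝ) (x : Fin n → ℝ) : ℝ :=
  x ⬝ᵥ (Q *ᵥ x)

/-- Extension of a finite word `w ∈ ⟨M⟩^l` to a switching signal `ℕ → ⟨M⟩`
(using `d` beyond time `l`; the truncated cost does not depend on `d`). -/
def wordExt {M l : ℕ} (w : Fin l → Fin M) (d : Fin M) : ℕ → Fin M :=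
  fun k => if h : k < l then w ⟨k, h⟩ else d

/-- Truncated cost `Ṽ_γ(x) = ∑_{k=0}^{l} ξ(k,x,σ_γ)ᵀ Q ξ(k,x,σ_γ)` where `σ_γ`
follows the modes of the word `γ ∈ ⟨M⟩^l`. -/
def truncCost {n M l : ℕ} (A : Fin M → Matrix (Fin n) (Fin n) ℝ)
    (Q : Matrix (Fin n) (Fin n) ℝ) (d : Fin M) (γ : Fin l → Fin M)
    (x : Fin n → ℝ) : ℝ :=
  ∑ k ∈ Finset.range (l + 1), quadForm Q (trajL A (wordExt γ d) x k)

/-- Worst-case value function of the switched linear system with cost `xᵀQx`. -/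
noncomputable def valueFunLin {n M : ℕ} (A : Fin M → Matrix (Fin n) (Fin n) ℝ)
    (Q : Matrix (Fin n) (Fin n) ℝ) (x : Fin n → ℝ) : ℝ≥0∞ :=
  ⨆ σ : ℕ → Fin M, ∑' k : ℕ, ENNReal.ofReal (quadForm Q (trajL A σ x k))

/-! Along the signal that follows a word `w` of length `l + 1`, the truncated cost of the tail of
`w` at `A (w 0) x` is the truncated cost of the head of `w` at `x`, shifted by one step: it gains
the term `ξ(l+1)ᵀ Q ξ(l+1) ≤ η xᵀ Q x` and loses `xᵀ Q x`. Scaling by `1 / (1 - η)` turns this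
into the path-complete inequality. The upper bound holds because every truncated cost is a partial
sum of the infinite-horizon cost of some signal. -/

section Trajectory

variable {n M : ℕ} (A : Fin M → Matrix (Fin n) (Fin n) ℝ)

lemma trajL_congr {σ τ : ℕ → Fin M} (x : Fin n → ℝ) {k : ℕ} (h : ∀ j < k, σ j = τ j) :
    trajL A σ x k = trajL A τ x k := by
  induction k with
  | zero => rfl
  | succ k ih => simp only [trajL, h k k.lt_succ_self, ih fun j hj => h j (hj.trans k.lt_succ_self)]

lemma trajL_tail (σ : ℕ → Fin M) (x : Fin n → ℝ) (k : ℕ) :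
    trajL A (fun j => σ (j + 1)) (A (σ 0) *ᵥ x) k = trajL A σ x (k + 1) := by
  induction k with
  | zero => rfl
  | succ k ih => simp only [trajL, ih]

end Trajectory

lemma quadForm_nonneg {n : ℕ} {Q : Matrix (Fin n) (Fin n) ℝ} (hQ : Q.PosSemidef)
    (x : Fin n → ℝ) : 0 ≤ quadForm Q x := by
  simpa [quadForm] using hQ.dotProduct_mulVec_nonneg x

section Word

variable {M l : ℕ} (w : Fin (l + 1) → Fin M) (d : Fin M)

lemma wordExt_zero : wordExt w d 0 = w 0 := by
  simp only [wordExt, dif_pos l.succ_pos]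
  rfl

lemma wordExt_castSucc_of_lt {k : ℕ} (hk : k < l) :
    wordExt (fun i : Fin l => w i.castSucc) d k = wordExt w d k := by
  simp only [wordExt, dif_pos hk, dif_pos (hk.trans l.lt_succ_self)]
  rfl

lemma wordExt_succ : wordExt (fun i : Fin l => w i.succ) d = fun k => wordExt w d (k + 1) := by
  funext k
  by_cases hk : k < l
  · simp only [wordExt, dif_pos hk, dif_pos (Nat.succ_lt_succ hk)]
    rfl
  · simp only [wordExt, dif_neg hk, dif_neg (show ¬k + 1 < l + 1 by omega)]

end Word

section TruncCost

variable {n M l : ℕ} (A : Fin M → Matrix (Fin n) (Fin n) ℝ) (Q : Matrix (Fin n) (Fin n) ℝ)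
  (d : Fin M) (w : Fin (l + 1) → Fin M) (x : Fin n → ℝ)

lemma truncCost_castSucc :
    truncCost A Q d (fun i : Fin l => w i.castSucc) x
      = ∑ k ∈ Finset.range (l + 1), quadForm Q (trajL A (wordExt w d) x k) := by
  refine Finset.sum_congr rfl fun k hk => congrArg _ (trajL_congr A x fun j hj => ?_)
  exact wordExt_castSucc_of_lt w d (by rw [Finset.mem_range] at hk; omega)

lemma truncCost_succ :
    truncCost A Q d (fun i : Fin l => w i.succ) (A (w 0) *ᵥ x)
      = ∑ k ∈ Finset.range (l + 1), quadForm Q (trajL A (wordExt w d) x (k + 1)) := by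
  refine Finset.sum_congr rfl fun k _ => ?_
  rw [wordExt_succ, ← wordExt_zero w d, trajL_tail]

lemma truncCost_succ_eq_castSucc_add :
    truncCost A Q d (fun i : Fin l => w i.succ) (A (w 0) *ᵥ x)
      = truncCost A Q d (fun i : Fin l => w i.castSucc) x
        + quadForm Q (trajL A (wordExt w d) x (l + 1)) - quadForm Q x := by
  have h := Finset.sum_range_succ' (fun k => quadForm Q (trajL A (wordExt w d) x k)) (l + 1)
  rw [Finset.sum_range_succ] at h
  change _ = _ + quadForm Q x at h
  rw [truncCost_succ, truncCost_castSucc]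
  linarith

end TruncCost

lemma ofReal_sum_range_le_valueFunLin {n M : ℕ} (A : Fin M → Matrix (Fin n) (Fin n) ℝ)
    {Q : Matrix (Fin n) (Fin n) ℝ} (hQ : Q.PosSemidef) (σ : ℕ → Fin M) (x : Fin n → ℝ)
    (N : ℕ) :
    ENNReal.ofReal (∑ k ∈ Finset.range N, quadForm Q (trajL A σ x k)) ≤ valueFunLin A Q x := by
  rw [ENNReal.ofReal_sum_of_nonneg fun k _ => quadForm_nonneg hQ _]
  exact (ENNReal.sum_le_tsum _).trans
    (le_iSup (fun σ => ∑' k, ENNReal.ofReal (quadForm Q (trajL A σ x k))) σ)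

lemma add_scaled_le_scaled_of_le_mul {η q S T : ℝ} (hη : η < 1) (hT : T ≤ η * q) :
    q + 1 / (1 - η) * (S + T - q) ≤ 1 / (1 - η) * S := by
  have hpos : 0 < 1 - η := sub_pos.mpr hη
  rw [← sub_nonneg]
  have h : 1 / (1 - η) * S - (q + 1 / (1 - η) * (S + T - q)) = (η * q - T) / (1 - η) := by
    field_simp
    ring
  rw [h]
  exact div_nonneg (sub_nonneg.mpr hT) hpos.le

lemma mul_iSup_one_div_mul {ι : Sort*} {c : ℝ} (hc : 0 < c) (f : ι → ℝ) :
    c * ⨆ i, 1 / c * f i = ⨆ i, f i := by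
  rw [Real.mul_iSup_of_nonneg hc.le]
  congr 1 with i
  field_simp

theorem stmt_11_general {n M l : ℕ} (hM : 0 < M) (A : Fin M → Matrix (Fin n) (Fin n) ℝ)
    (Q : Matrix (Fin n) (Fin n) ℝ) (hQ : Q.PosDef)
    (ηl : ℝ) (hη1 : ηl < 1)
    (hη : ∀ (x : Fin n → ℝ) (σ : ℕ → Fin M),
      quadForm Q (trajL A σ x (l + 1)) ≤ ηl * quadForm Q x) :
    (∀ (w : Fin (l + 1) → Fin M) (x : Fin n → ℝ),
      quadForm Q x
        + (1 / (1 - ηl)) * truncCost A Q ⟨0, hM⟩ (fun k : Fin l => w k.succ)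
            (A (w 0) *ᵥ x)
        ≤ (1 / (1 - ηl)) * truncCost A Q ⟨0, hM⟩ (fun k : Fin l => w k.castSucc) x) ∧
    (∀ x : Fin n → ℝ,
      ENNReal.ofReal ((1 - ηl) *
          ⨆ γ : Fin l → Fin M, (1 / (1 - ηl)) * truncCost A Q ⟨0, hM⟩ γ x)
        ≤ valueFunLin A Q x) := by
  refine ⟨fun w x => ?_, fun x => ?_⟩
  · rw [truncCost_succ_eq_castSucc_add]
    exact add_scaled_le_scaled_of_le_mul hη1 (hη x _)
  · have : Nonempty (Fin M) := ⟨⟨0, hM⟩⟩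
    obtain ⟨γ, hγ⟩ := exists_eq_ciSup_of_finite (f := fun γ : Fin l → Fin M =>
      truncCost A Q ⟨0, hM⟩ γ x)
    rw [mul_iSup_one_div_mul (sub_pos.mpr hη1), ← hγ]
    exact ofReal_sum_range_le_valueFunLin A hQ.posSemidef _ x _

theorem stmt_11 {n M l : ℕ} (hM : 0 < M) (A : Fin M → Matrix (Fin n) (Fin n) ℝ)
    (Q : Matrix (Fin n) (Fin n) ℝ) (hQ : Q.PosDef)
    (hstab : ∀ (σ : ℕ → Fin M) (x : Fin n → ℝ),
      Tendsto (trajL A σ x) atTop (nhds 0))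
    (ηl : ℝ) (hη0 : 0 ≤ ηl) (hη1 : ηl < 1)
    (hη : ∀ (x : Fin n → ℝ) (σ : ℕ → Fin M),
      quadForm Q (trajL A σ x (l + 1)) ≤ ηl * quadForm Q x) :
    (∀ (w : Fin (l + 1) → Fin M) (x : Fin n → ℝ),
      quadForm Q x
        + (1 / (1 - ηl)) * truncCost A Q ⟨0, hM⟩ (fun k : Fin l => w k.succ)
            (A (w 0) *ᵥ x)
        ≤ (1 / (1 - ηl)) * truncCost A Q ⟨0, hM⟩ (fun k : Fin l => w k.castSucc) x) ∧
    (∀ x : Fin n → ℝ,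
      ENNReal.ofReal ((1 - ηl) *
          ⨆ γ : Fin l → Fin M, (1 / (1 - ηl)) * truncCost A Q ⟨0, hM⟩ γ x)
        ≤ valueFunLin A Q x) :=
  stmt_11_general hM A Q hQ ηl hη1 hη
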